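/- The coefficients of the Felder–Varchenko dynamical representation satisfy the intertwining identity corresponding to the relation γ(z)α(q²z) = α(z)γ(q²z): for every integer k ≥ 1 and all λ, ω ∈ ℂ and nonzero complex z for which all theta factors appearing in denominators are nonzero, C_k(λ, z)·A_k(λ−1, q²z) = A_{k−1}(λ, z)·C_k(λ−1, q²z). -/

import Mathlib

noncomputable section

open Finset

/-- The normalized Jacobi theta function `θ(z) = ∏_{j≥0} (1 - z p^j)(1 - p^{j+1}/z)`. -/
def theta (p : ℝ) (z : ℂ) : ℂ :=
  ∏' j : ℕ, ((1 - z * (p : ℂ) ^ j) * (1 - (p : ℂ) ^ (j + 1) / z))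

/-- Complex power `q ^ l := exp (l · log q)` for a real base `q`. -/
def qp (q : ℝ) (l : ℂ) : ℂ := Complex.exp (l * (Real.log q : ℂ))

/-- Elliptic Pochhammer symbol `(a)_n = ∏_{i=0}^{n-1} θ(a q^{2i})` in base `q², p`. -/
def epoch (p q : ℝ) (a : ℂ) (n : ℕ) : ℂ :=
  ∏ i ∈ Finset.range n, theta p (a * qp q (2 * (i : ℂ)))

/-- Elliptic binomial coefficient `[k over l] = ∏_{i=1}^{l} θ(q^{2(k-l+i)})/θ(q^{2i})`. -/
def ellbin (p q : ℝ) (k l : ℕ) : ℂ :=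
  ∏ i ∈ Finset.range l,
    theta p (qp q (2 * ((k : ℂ) - (l : ℂ) + (i : ℂ) + 1))) / theta p (qp q (2 * ((i : ℂ) + 1)))

/-- Entry `a(λ,z)` of the Andrews–Baxter–Forrester `R`-matrix. -/
def Ra (p q : ℝ) (lam z : ℂ) : ℂ :=
  theta p z * theta p (qp q (2 * (lam + 2))) /
    (theta p (qp q 2 * z) * theta p (qp q (2 * (lam + 1))))

/-- Entry `b(λ,z)` of the Andrews–Baxter–Forrester `R`-matrix. -/
def Rb (p q : ℝ) (lam z : ℂ) : ℂ :=
  theta p (qp q 2) * theta p (qp q (-2 * (lam + 1)) * z) /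
    (theta p (qp q 2 * z) * theta p (qp q (-2 * (lam + 1))))

/-- Entry `c(λ,z)` of the Andrews–Baxter–Forrester `R`-matrix. -/
def Rc (p q : ℝ) (lam z : ℂ) : ℂ :=
  theta p (qp q 2) * theta p (qp q (2 * (lam + 1)) * z) /
    (theta p (qp q 2 * z) * theta p (qp q (2 * (lam + 1))))

/-- Entry `d(λ,z)` of the Andrews–Baxter–Forrester `R`-matrix. -/
def Rd (p q : ℝ) (lam z : ℂ) : ℂ :=
  theta p z * theta p (qp q (-2 * lam)) /
    (theta p (qp q 2 * z) * theta p (qp q (-2 * (lam + 1))))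

/-- Coefficient `A_k(λ,z)` of the Felder–Varchenko dynamical representation `π^ω`. -/
def Ak (p q : ℝ) (om : ℂ) (k : ℕ) (lam z : ℂ) : ℂ :=
  qp q (2 * (k : ℂ)) * theta p (qp q (-2 * (lam + 1) - 2 * (k : ℂ))) *
      theta p (z * qp q (om - 2 * (k : ℂ) + 1)) /
    (theta p (qp q (-2 * (lam + 1))) * theta p (z * qp q (om + 1)))

/-- Coefficient `B_k(λ,z)` of the Felder–Varchenko dynamical representation `π^ω`. -/
def Bk (p q : ℝ) (om : ℂ) (k : ℕ) (lam z : ℂ) : ℂ :=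
  qp q (k : ℂ) * theta p (qp q 2) *
      theta p (z * qp q (-2 * (lam + 1) + om - 2 * (k : ℂ) - 1)) /
    (theta p (qp q (-2 * (lam + 1))) * theta p (z * qp q (om + 1)))

/-- Coefficient `C_k(λ,z)` of the Felder–Varchenko dynamical representation `π^ω`;
`C_0 = 0`. -/
def Ck (p q : ℝ) (om : ℂ) (k : ℕ) (lam z : ℂ) : ℂ :=
  if k = 0 then 0
  else
    qp q (-((k : ℂ) - 1)) * theta p (qp q (2 * (k : ℂ))) *
        theta p (qp q (2 * (om - (k : ℂ) + 1))) *
        theta p (z * qp q (2 * (lam + 1) - om + 2 * (k : ℂ) - 1)) /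
      (theta p (qp q 2) * theta p (qp q (2 * (lam + 1))) * theta p (z * qp q (om + 1)))

/-- Coefficient `D_k(λ,z)` of the Felder–Varchenko dynamical representation `π^ω`. -/
def Dk (p q : ℝ) (om : ℂ) (k : ℕ) (lam z : ℂ) : ℂ :=
  theta p (qp q (-2 * (lam + 1 - om + (k : ℂ)))) * theta p (z * qp q (-om + 2 * (k : ℂ) + 1)) /
    (theta p (qp q (-2 * (lam + 1))) * theta p (z * qp q (om + 1)))

/-- `F(μ) = q^μ θ(q^{-2(μ+1)})`. -/
def Fdet (p q : ℝ) (mu : ℂ) : ℂ := qp q mu * theta p (qp q (-2 * (mu + 1)))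

/-- The coefficient `C_{kl}(μ)` from the corepresentation matrix elements. -/
def Ckl (p q : ℝ) (k l : ℕ) (mu : ℂ) : ℂ :=
  ellbin p q k l * epoch p q (qp q (2 * (mu - (l : ℂ) + 2))) l /
    epoch p q (qp q (2 * (mu + (k : ℂ) - 2 * (l : ℂ) + 2))) l

/-- The terminating balanced very-well-poised elliptic hypergeometric series
`₁₀ω₉(a₁; a₄,…,a₁₀)`, truncated at `n`. -/
def tenW9 (p q : ℝ) (n : ℕ) (a1 a4 a5 a6 a7 a8 a9 a10 : ℂ) : ℂ :=
  ∑ k ∈ Finset.range (n + 1),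
    theta p (a1 * qp q (4 * (k : ℂ))) / theta p a1 *
      (epoch p q a1 k * epoch p q a4 k * epoch p q a5 k * epoch p q a6 k * epoch p q a7 k *
        epoch p q a8 k * epoch p q a9 k * epoch p q a10 k * qp q (2 * (k : ℂ))) /
      (epoch p q (qp q 2) k * epoch p q (a1 * qp q 2 / a4) k * epoch p q (a1 * qp q 2 / a5) k *
        epoch p q (a1 * qp q 2 / a6) k * epoch p q (a1 * qp q 2 / a7) k *
        epoch p q (a1 * qp q 2 / a8) k * epoch p q (a1 * qp q 2 / a9) k *
        epoch p q (a1 * qp q 2 / a10) k)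

/-- The product of all theta factors appearing in denominators of the terms of
`tenW9 p q n a1 a4 … a10` (including the `θ(a₁)` from the very-well-poised prefactor). -/
def tenW9Den (p q : ℝ) (n : ℕ) (a1 a4 a5 a6 a7 a8 a9 a10 : ℂ) : ℂ :=
  theta p a1 * epoch p q (qp q 2) n * epoch p q (a1 * qp q 2 / a4) n *
    epoch p q (a1 * qp q 2 / a5) n * epoch p q (a1 * qp q 2 / a6) n *
    epoch p q (a1 * qp q 2 / a7) n * epoch p q (a1 * qp q 2 / a8) n *
    epoch p q (a1 * qp q 2 / a9) n * epoch p q (a1 * qp q 2 / a10) n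

/-! Splitting off the first factor of each half of the product,
`θ(w) = (1 - w) ∏ (1 - w p^{j+1}) ∏ (1 - p^{j+1}/w)` and `θ(1/w)` has the same tail with `1 - 1/w`
in front, which gives the inversion formula `θ(1/w) = -w⁻¹ θ(w)`. After the shifts `z ↦ q²z`,
`λ ↦ λ - 1` the theta factors of the two sides agree except for `θ(q^{-2λ})`, `θ(q^{-2(λ+1)})`
against `θ(q^{2λ})`, `θ(q^{2(λ+1)})`; inversion exchanges these, and the leftover powers of `q`
match because `q^{2k} q^{2λ} = q^{2(k-1)} q^{2(λ+1)}`. -/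

section ThetaInversion

variable {r : ℂ}

lemma multipliable_one_sub_mul_pow (hr : ‖r‖ < 1) (x : ℂ) :
    Multipliable fun j : ℕ => 1 - x * r ^ j := by
  simpa [sub_eq_add_neg] using multipliable_one_add_of_summable (f := fun j : ℕ => -(x * r ^ j))
    (by simpa [norm_mul, norm_pow] using
      (summable_geometric_of_lt_one (norm_nonneg r) hr).mul_left ‖x‖)

lemma tprod_one_sub_mul_pow (hr : ‖r‖ < 1) (x : ℂ) :
    ∏' j : ℕ, (1 - x * r ^ j) = (1 - x) * ∏' j : ℕ, (1 - x * r * r ^ j) := by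
  have shift : (fun j : ℕ => 1 - x * r ^ (j + 1)) = fun j => 1 - x * r * r ^ j := by
    funext j; ring
  rw [tprod_eq_zero_mul' (shift ▸ multipliable_one_sub_mul_pow hr (x * r)), shift, pow_zero,
    mul_one]

variable {p : ℝ}

lemma theta_eq_tprod_mul_tprod (hp : |p| < 1) (w : ℂ) :
    theta p w = (∏' j : ℕ, (1 - w * (p : ℂ) ^ j)) * ∏' j : ℕ, (1 - p / w * (p : ℂ) ^ j) := by
  have hr : ‖(p : ℂ)‖ < 1 := by simpa using hp
  rw [theta, ← (multipliable_one_sub_mul_pow hr w).tprod_mul (multipliable_one_sub_mul_pow hr _)]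
  congr! 2 with j
  ring

theorem theta_inv (hp : |p| < 1) {w : ℂ} (hw : w ≠ 0) : theta p w⁻¹ = -w⁻¹ * theta p w := by
  have hr : ‖(p : ℂ)‖ < 1 := by simpa using hp
  rw [theta_eq_tprod_mul_tprod hp, theta_eq_tprod_mul_tprod hp, tprod_one_sub_mul_pow hr w,
    tprod_one_sub_mul_pow hr w⁻¹, div_inv_eq_mul, ← div_eq_inv_mul, mul_comm (p : ℂ) w]
  field_simp
  ring

end ThetaInversion

section ComplexPower

variable (q : ℝ)

lemma qp_add (a b : ℂ) : qp q (a + b) = qp q a * qp q b := by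
  simp [qp, add_mul, Complex.exp_add]

lemma qp_neg (a : ℂ) : qp q (-a) = (qp q a)⁻¹ := by
  simp [qp, Complex.exp_neg]

lemma qp_ne_zero (a : ℂ) : qp q a ≠ 0 := Complex.exp_ne_zero _

lemma qp_two_mul_mul {a b : ℂ} (h : a + 2 = b) (z : ℂ) : qp q 2 * z * qp q a = z * qp q b := by
  rw [← h, qp_add]; ring

lemma theta_qp_neg {p : ℝ} (hp : |p| < 1) (a : ℂ) :
    theta p (qp q (-a)) = -(qp q a)⁻¹ * theta p (qp q a) := by
  rw [qp_neg, theta_inv hp (qp_ne_zero q a)]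

end ComplexPower

theorem dynrep_gamma_alpha_general (p q : ℝ) (hp0 : 0 < p) (hp1 : p < 1)
    (k : ℕ) (lam om z : ℂ) :
    Ck p q om k lam z * Ak p q om k (lam - 1) (qp q 2 * z) =
      Ak p q om (k - 1) lam z * Ck p q om k (lam - 1) (qp q 2 * z) := by
  obtain _ | m := k
  · simp [Ck]
  have hp : |p| < 1 := abs_lt.mpr ⟨by linarith, hp1⟩
  simp only [Ck, Ak, Nat.add_sub_cancel, Nat.add_one_ne_zero, if_false, Nat.cast_add, Nat.cast_one,
    sub_add_cancel, add_sub_cancel_right, neg_mul]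
  rw [qp_two_mul_mul q (a := om - 2 * (m + 1) + 1) (b := om - 2 * m + 1) (by ring),
    qp_two_mul_mul q (a := 2 * lam - om + 2 * (m + 1) - 1)
      (b := 2 * (lam + 1) - om + 2 * (m + 1) - 1) (by ring),
    show -(2 * lam) - 2 * ((m : ℂ) + 1) = -(2 * (lam + 1)) - 2 * m by ring,
    theta_qp_neg q hp, theta_qp_neg q hp]
  have shift_m : qp q (2 * ((m : ℂ) + 1)) = qp q (2 * m) * qp q 2 := by rw [← qp_add]; ring_nf
  have shift_lam : qp q (2 * (lam + 1)) = qp q (2 * lam) * qp q 2 := by rw [← qp_add]; ring_nf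
  rw [shift_m, shift_lam]
  simp only [div_eq_mul_inv, mul_inv, inv_neg, neg_mul, inv_inv]
  ring

/-- Intertwining identity corresponding to `γ(z)α(q²z) = α(z)γ(q²z)`:
`C_k(λ,z) A_k(λ−1, q²z) = A_{k−1}(λ,z) C_k(λ−1, q²z)`. -/
theorem dynrep_gamma_alpha (p q : ℝ) (hp0 : 0 < p) (hp1 : p < 1) (hq0 : 0 < q) (hq1 : q < 1)
    (k : ℕ) (hk : 1 ≤ k) (lam om z : ℂ) (hz : z ≠ 0)
    (h1 : theta p (qp q (-2 * (lam + 1))) ≠ 0)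
    (h2 : theta p (qp q (-2 * lam)) ≠ 0)
    (h3 : theta p (z * qp q (om + 1)) ≠ 0)
    (h4 : theta p (qp q 2 * z * qp q (om + 1)) ≠ 0)
    (h5 : theta p (qp q 2) ≠ 0)
    (h6 : theta p (qp q (2 * (lam + 1))) ≠ 0)
    (h7 : theta p (qp q (2 * lam)) ≠ 0) :
    Ck p q om k lam z * Ak p q om k (lam - 1) (qp q 2 * z) =
      Ak p q om (k - 1) lam z * Ck p q om k (lam - 1) (qp q 2 * z) :=
  dynrep_gamma_alpha_general p q hp0 hp1 k lam om z
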